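/- The Habiro polynomials of the 5_2 knot, H_n(q) = (-1)^n q^{n(n+3)/2} Σ_{k=0}^n q^{k(k+1)} binom(n,k)_q, satisfy the second-order recursion H_{n+2}(q) + q^{3+n}(1 + q - q^{2+n} + q^{4+2n}) H_{n+1}(q) - q^{6+2n}(-1 + q^{1+n}) H_n(q) = 0 for all n ≥ 0, with H_0(q) = 1. -/

import Mathlib

/-!
Write `C m n = ∑_{k ≤ n} q^(k(k+m)) [n choose k]_q` (`twistedSum q m n`), so that
`H_n = (-1)^n q^(n(n+3)/2) C 1 n`.
The two q-Pascal rules give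
`C m (n+1) = C m n + q^(n+m+1) C (m+1) n` and `C m (n+1) = C (m+1) n + q^(m+1) C (m+2) n`;
eliminating `C 2` and `C 3` between four instances of these yields a three-term recurrence
for `C 1`, which becomes the stated one after rescaling by the prefactor of `H_n`.
-/

open Finset

/-- (q;q)_n = ∏_{j=1}^n (1 - q^j). -/
noncomputable def qPoch (q : ℂ) (n : ℕ) : ℂ := ∏ j ∈ Finset.range n, (1 - q ^ (j + 1))


/-- The Gaussian binomial coefficient binom(n,k)_q. -/
noncomputable def qBinom (q : ℂ) (n k : ℕ) : ℂ :=
  qPoch q n / (qPoch q k * qPoch q (n - k))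

/-- The Habiro polynomial H_n(q) of the 5_2 knot. -/
noncomputable def Hab (q : ℂ) (n : ℕ) : ℂ :=
  (-1) ^ n * q ^ (n * (n + 3) / 2) *
    ∑ k ∈ Finset.range (n + 1), q ^ (k * (k + 1)) * qBinom q n k

section

variable {q : ℂ}

lemma qPoch_zero : qPoch q 0 = 1 :=
  prod_range_zero _

lemma qPoch_succ (n : ℕ) : qPoch q (n + 1) = qPoch q n * (1 - q ^ (n + 1)) :=
  prod_range_succ _ _

lemma one_sub_pow_succ_ne_zero (hq : ∀ j : ℕ, 1 ≤ j → q ^ j ≠ 1) (n : ℕ) :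
    1 - q ^ (n + 1) ≠ 0 :=
  sub_ne_zero.mpr (hq (n + 1) n.succ_pos).symm

lemma qPoch_ne_zero (hq : ∀ j : ℕ, 1 ≤ j → q ^ j ≠ 1) (n : ℕ) : qPoch q n ≠ 0 :=
  prod_ne_zero_iff.mpr fun j _ => one_sub_pow_succ_ne_zero hq j

lemma qBinom_zero_right (hq : ∀ j : ℕ, 1 ≤ j → q ^ j ≠ 1) (n : ℕ) : qBinom q n 0 = 1 := by
  rw [qBinom, Nat.sub_zero, qPoch_zero, one_mul, div_self (qPoch_ne_zero hq n)]

lemma qBinom_self (hq : ∀ j : ℕ, 1 ≤ j → q ^ j ≠ 1) (n : ℕ) : qBinom q n n = 1 := by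
  rw [qBinom, Nat.sub_self, qPoch_zero, mul_one, div_self (qPoch_ne_zero hq n)]

lemma qBinom_pascal (hq : ∀ j : ℕ, 1 ≤ j → q ^ j ≠ 1) (k m : ℕ) :
    qBinom q (k + m + 2) (k + 1)
        = qBinom q (k + m + 1) (k + 1) + q ^ (m + 1) * qBinom q (k + m + 1) k ∧
      qBinom q (k + m + 2) (k + 1)
        = q ^ (k + 1) * qBinom q (k + m + 1) (k + 1) + qBinom q (k + m + 1) k := by
  rw [qBinom, qBinom, qBinom, show k + m + 2 - (k + 1) = m + 1 by omega,
    show k + m + 1 - (k + 1) = m by omega, show k + m + 1 - k = m + 1 by omega,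
    qPoch_succ (k + m + 1), qPoch_succ m, qPoch_succ k]
  have := qPoch_ne_zero hq k
  have := qPoch_ne_zero hq m
  have := one_sub_pow_succ_ne_zero hq k
  have := one_sub_pow_succ_ne_zero hq m
  field_simp
  constructor <;> ring

-- `qBinom q n k` does not vanish for `k > n`, which would break the Pascal rules at the edge.
noncomputable def qChoose (q : ℂ) (n k : ℕ) : ℂ := if k ≤ n then qBinom q n k else 0

lemma qChoose_zero_right (hq : ∀ j : ℕ, 1 ≤ j → q ^ j ≠ 1) (n : ℕ) : qChoose q n 0 = 1 := by
  rw [qChoose, if_pos n.zero_le, qBinom_zero_right hq]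

lemma qChoose_succ_self_right (n : ℕ) : qChoose q n (n + 1) = 0 :=
  if_neg n.not_succ_le_self

lemma qChoose_pascal (hq : ∀ j : ℕ, 1 ≤ j → q ^ j ≠ 1) (n k : ℕ) :
    qChoose q (n + 1) (k + 1) = qChoose q n (k + 1) + q ^ (n - k) * qChoose q n k ∧
      qChoose q (n + 1) (k + 1) = q ^ (k + 1) * qChoose q n (k + 1) + qChoose q n k := by
  unfold qChoose
  rcases lt_trichotomy k n with hkn | rfl | hnk
  · obtain ⟨m, rfl⟩ := Nat.exists_eq_add_of_lt hkn
    rw [if_pos (by omega), if_pos (by omega), if_pos (by omega),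
      show k + m + 1 - k = m + 1 by omega]
    exact qBinom_pascal hq k m
  · simp [qBinom_self hq]
  · simp [show ¬k ≤ n by omega, show ¬k + 1 ≤ n + 1 by omega, show ¬k + 1 ≤ n by omega]

noncomputable def twistedSum (q : ℂ) (m n : ℕ) : ℂ :=
  ∑ k ∈ range (n + 1), q ^ (k * (k + m)) * qChoose q n k

lemma twistedSum_eq_one_add (hq : ∀ j : ℕ, 1 ≤ j → q ^ j ≠ 1) (m n : ℕ) :
    twistedSum q m n
      = 1 + ∑ k ∈ range (n + 1), q ^ ((k + 1) * (k + 1 + m)) * qChoose q n (k + 1) := by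
  rw [sum_range_succ, qChoose_succ_self_right, mul_zero, add_zero, twistedSum,
    sum_range_succ', qChoose_zero_right hq, zero_mul, pow_zero, one_mul, add_comm]

lemma twistedSum_succ (hq : ∀ j : ℕ, 1 ≤ j → q ^ j ≠ 1) (m n : ℕ) :
    twistedSum q m (n + 1) = twistedSum q m n + q ^ (n + m + 1) * twistedSum q (m + 1) n := by
  have step : ∀ k ∈ range (n + 1),
      q ^ ((k + 1) * (k + 1 + m)) * qChoose q (n + 1) (k + 1)
        = q ^ ((k + 1) * (k + 1 + m)) * qChoose q n (k + 1)
          + q ^ (n + m + 1) * (q ^ (k * (k + (m + 1))) * qChoose q n k) := by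
    intro k hk
    obtain ⟨j, rfl⟩ := Nat.exists_eq_add_of_le (Nat.lt_succ_iff.mp (mem_range.mp hk))
    rw [(qChoose_pascal hq _ k).1, Nat.add_sub_cancel_left]
    ring
  rw [twistedSum, sum_range_succ', sum_congr rfl step, sum_add_distrib, ← mul_sum,
    qChoose_zero_right hq, twistedSum_eq_one_add hq m n, twistedSum]
  ring

lemma twistedSum_succ' (hq : ∀ j : ℕ, 1 ≤ j → q ^ j ≠ 1) (m n : ℕ) :
    twistedSum q m (n + 1) = twistedSum q (m + 1) n + q ^ (m + 1) * twistedSum q (m + 2) n := by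
  have step : ∀ k ∈ range (n + 1),
      q ^ ((k + 1) * (k + 1 + m)) * qChoose q (n + 1) (k + 1)
        = q ^ ((k + 1) * (k + 1 + (m + 1))) * qChoose q n (k + 1)
          + q ^ (m + 1) * (q ^ (k * (k + (m + 2))) * qChoose q n k) := by
    intro k _
    rw [(qChoose_pascal hq n k).2]
    ring
  rw [twistedSum, sum_range_succ', sum_congr rfl step, sum_add_distrib, ← mul_sum,
    qChoose_zero_right hq, twistedSum_eq_one_add hq (m + 1) n, twistedSum]
  ring

lemma twistedSum_one_recursion (hq : ∀ j : ℕ, 1 ≤ j → q ^ j ≠ 1) (n : ℕ) :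
    twistedSum q 1 (n + 2)
      = (1 + q - q ^ (n + 2) + q ^ (2 * n + 4)) * twistedSum q 1 (n + 1)
        + (q ^ (n + 2) - q) * twistedSum q 1 n := by
  linear_combination twistedSum_succ hq 1 (n + 1) + q ^ (n + 3) * twistedSum_succ hq 2 n
    - q ^ (2 * n + 4) * twistedSum_succ' hq 1 n + (q ^ (n + 2) - q) * twistedSum_succ hq 1 n

lemma Hab_eq_twistedSum (n : ℕ) :
    Hab q n = (-1) ^ n * q ^ (n * (n + 3) / 2) * twistedSum q 1 n := by
  refine congrArg _ (sum_congr rfl fun k hk => ?_)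
  rw [qChoose, if_pos (Nat.lt_succ_iff.mp (mem_range.mp hk))]

end

lemma succ_mul_succ_add_three_div_two (n : ℕ) :
    (n + 1) * (n + 1 + 3) / 2 = n * (n + 3) / 2 + (n + 2) := by
  rw [show (n + 1) * (n + 1 + 3) = n * (n + 3) + (n + 2) * 2 by ring,
    Nat.add_mul_div_right _ _ two_pos]

theorem Hab_recursion (q : ℂ) (hq : ∀ j : ℕ, 1 ≤ j → q ^ j ≠ 1) :
    (∀ n : ℕ,
      Hab q (n + 2) + q ^ (3 + n) * (1 + q - q ^ (2 + n) + q ^ (4 + 2 * n)) * Hab q (n + 1)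
        - q ^ (6 + 2 * n) * (-1 + q ^ (1 + n)) * Hab q n = 0) ∧
    Hab q 0 = 1 := by
  refine ⟨fun n => ?_, by simp [Hab, qBinom, qPoch]⟩
  rw [Hab_eq_twistedSum, Hab_eq_twistedSum, Hab_eq_twistedSum,
    succ_mul_succ_add_three_div_two (n + 1), succ_mul_succ_add_three_div_two n]
  linear_combination (-1) ^ n * q ^ (n * (n + 3) / 2) * q ^ (2 * n + 5)
    * twistedSum_one_recursion hq n
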